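/- Let ρ be a two-qubit X-state: a 4×4 density matrix indexed by {0,1,2,3} (identifying (i,j) ∈ Fin 2 × Fin 2 with 2i+j) whose only possibly nonzero entries are the diagonal entries ρ₀₀, ρ₁₁, ρ₂₂, ρ₃₃ and the anti-diagonal entries ρ₀₃, ρ₃₀, ρ₁₂, ρ₂₁. Then the imaginarity steering functional equals I₂(ρ) = 2·|Re ρ₁₂ + Re ρ₀₃| + 2·|Re ρ₁₂ − Re ρ₀₃| (equivalently I₂(ρ) = |t₁₁| + |t₂₂|, with n₁ = n₂ = 0). -/

import Mathlib

open Matrix Kronecker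
open scoped ComplexOrder

/-- Trace norm of a square complex matrix: `Tr[sqrt(Aᴴ A)]`. -/
noncomputable def traceNorm {n : Type*} [Fintype n] [DecidableEq n]
    (A : Matrix n n ℂ) : ℝ :=
  ((Matrix.posSemidef_conjTranspose_mul_self A).1.eigenvectorUnitary.1 *
    Matrix.diagonal ((fun x : ℝ => ((Real.sqrt x : ℝ) : ℂ)) ∘ (Matrix.posSemidef_conjTranspose_mul_self A).1.eigenvalues) *
    (star (Matrix.posSemidef_conjTranspose_mul_self A).1.eigenvectorUnitary : Matrix n n ℂ)).trace.re

/-- Robustness of imaginarity: `(1/2) ‖ρ - ρᵀ‖₁`. -/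
noncomputable def roi {n : Type*} [Fintype n] [DecidableEq n]
    (ρ : Matrix n n ℂ) : ℝ :=
  (1 / 2) * traceNorm (ρ - ρ.transpose)
def σx : Matrix (Fin 2) (Fin 2) ℂ := !![0, 1; 1, 0]
def σy : Matrix (Fin 2) (Fin 2) ℂ := !![0, -Complex.I; Complex.I, 0]
def σz : Matrix (Fin 2) (Fin 2) ℂ := !![1, 0; 0, -1]
/-- Hadamard matrix (x-basis change). -/
noncomputable def Hm : Matrix (Fin 2) (Fin 2) ℂ :=
  (Real.sqrt 2 : ℂ)⁻¹ • !![1, 1; 1, -1]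
/-- Eigenvector matrix of σy (y-basis change). -/
noncomputable def Vm : Matrix (Fin 2) (Fin 2) ℂ :=
  (Real.sqrt 2 : ℂ)⁻¹ • !![1, 1; Complex.I, -Complex.I]

/-- Robustness of imaginarity in the x-basis. -/
noncomputable def roiX (σ : Matrix (Fin 2) (Fin 2) ℂ) : ℝ := roi (Hm * σ * Hm)
/-- Robustness of imaginarity in the y-basis. -/
noncomputable def roiY (σ : Matrix (Fin 2) (Fin 2) ℂ) : ℝ := roi (Vmᴴ * σ * Vm)
noncomputable def n1 (ρ : Matrix (Fin 2 × Fin 2) (Fin 2 × Fin 2) ℂ) : ℝ :=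
  ((((1 : Matrix (Fin 2) (Fin 2) ℂ) ⊗ₖ σx) * ρ).trace).re
noncomputable def n2 (ρ : Matrix (Fin 2 × Fin 2) (Fin 2 × Fin 2) ℂ) : ℝ :=
  ((((1 : Matrix (Fin 2) (Fin 2) ℂ) ⊗ₖ σy) * ρ).trace).re
noncomputable def t11 (ρ : Matrix (Fin 2 × Fin 2) (Fin 2 × Fin 2) ℂ) : ℝ :=
  (((σx ⊗ₖ σx) * ρ).trace).re
noncomputable def t22 (ρ : Matrix (Fin 2 × Fin 2) (Fin 2 × Fin 2) ℂ) : ℝ :=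
  (((σy ⊗ₖ σy) * ρ).trace).re

/-- The imaginarity steering functional. -/
noncomputable def I2 (ρ : Matrix (Fin 2 × Fin 2) (Fin 2 × Fin 2) ℂ) : ℝ :=
  (1 / 2) * (|n1 ρ - t11 ρ| + |n1 ρ + t11 ρ| + |n2 ρ - t22 ρ| + |n2 ρ + t22 ρ|)

/-! The local components `n₁, n₂` only involve entries outside the X pattern, so they vanish,
and `I₂` collapses to `|t₁₁| + |t₂₂|`. Hermiticity identifies `Re ρ₂₁` with `Re ρ₁₂` and
`Re ρ₃₀` with `Re ρ₀₃`, which turns `t₁₁, t₂₂` into `2 (Re ρ₁₂ ± Re ρ₀₃)`. -/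

section EntryFormulas

variable (ρ : Matrix (Fin 2 × Fin 2) (Fin 2 × Fin 2) ℂ)

theorem n1_eq_re_entries :
    n1 ρ = (ρ (0, 1) (0, 0) + ρ (0, 0) (0, 1) + ρ (1, 1) (1, 0) + ρ (1, 0) (1, 1)).re := by
  simp [n1, Matrix.trace, Matrix.mul_apply, Fintype.sum_prod_type, Fin.sum_univ_two, σx,
    Matrix.one_apply]
  ring

theorem n2_eq_im_entries :
    n2 ρ = (ρ (0, 1) (0, 0) - ρ (0, 0) (0, 1) + ρ (1, 1) (1, 0) - ρ (1, 0) (1, 1)).im := by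
  simp [n2, Matrix.trace, Matrix.mul_apply, Fintype.sum_prod_type, Fin.sum_univ_two, σy,
    Matrix.one_apply]
  ring

theorem t11_eq_re_entries :
    t11 ρ = (ρ (1, 1) (0, 0) + ρ (1, 0) (0, 1) + ρ (0, 1) (1, 0) + ρ (0, 0) (1, 1)).re := by
  simp [t11, Matrix.trace, Matrix.mul_apply, Fintype.sum_prod_type, Fin.sum_univ_two, σx]
  ring

theorem t22_eq_re_entries :
    t22 ρ = (-ρ (1, 1) (0, 0) + ρ (1, 0) (0, 1) + ρ (0, 1) (1, 0) - ρ (0, 0) (1, 1)).re := by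
  simp [t22, Matrix.trace, Matrix.mul_apply, Fintype.sum_prod_type, Fin.sum_univ_two, σy]
  ring

end EntryFormulas

theorem I2_eq_abs_add_abs_of_n1_n2_eq_zero {ρ : Matrix (Fin 2 × Fin 2) (Fin 2 × Fin 2) ℂ}
    (h1 : n1 ρ = 0) (h2 : n2 ρ = 0) : I2 ρ = |t11 ρ| + |t22 ρ| := by
  rw [I2, h1, h2, zero_sub, zero_sub, zero_add, zero_add, abs_neg, abs_neg]
  ring

theorem Matrix.IsHermitian.re_apply_comm {n : Type*} {A : Matrix n n ℂ} (hA : A.IsHermitian)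
    (i j : n) : (A j i).re = (A i j).re := by
  rw [← hA.apply i j, Complex.star_def, Complex.conj_re]

theorem stmt17_general (ρ : Matrix (Fin 2 × Fin 2) (Fin 2 × Fin 2) ℂ)
    (hρ : ρ.PosSemidef)
    (hX : ∀ p q : Fin 2 × Fin 2, p ≠ q →
      ¬((p = ((0 : Fin 2), (0 : Fin 2)) ∧ q = ((1 : Fin 2), (1 : Fin 2)))
        ∨ (p = ((1 : Fin 2), (1 : Fin 2)) ∧ q = ((0 : Fin 2), (0 : Fin 2)))
        ∨ (p = ((0 : Fin 2), (1 : Fin 2)) ∧ q = ((1 : Fin 2), (0 : Fin 2)))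
        ∨ (p = ((1 : Fin 2), (0 : Fin 2)) ∧ q = ((0 : Fin 2), (1 : Fin 2)))) →
      ρ p q = 0) :
    I2 ρ = 2 * |(ρ ((0 : Fin 2), (1 : Fin 2)) ((1 : Fin 2), (0 : Fin 2))).re
        + (ρ ((0 : Fin 2), (0 : Fin 2)) ((1 : Fin 2), (1 : Fin 2))).re|
      + 2 * |(ρ ((0 : Fin 2), (1 : Fin 2)) ((1 : Fin 2), (0 : Fin 2))).re
        - (ρ ((0 : Fin 2), (0 : Fin 2)) ((1 : Fin 2), (1 : Fin 2))).re|
    ∧ n1 ρ = 0 ∧ n2 ρ = 0 := by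
  have hn1 : n1 ρ = 0 := by
    rw [n1_eq_re_entries, hX (0, 1) (0, 0) (by decide) (by decide),
      hX (0, 0) (0, 1) (by decide) (by decide), hX (1, 1) (1, 0) (by decide) (by decide),
      hX (1, 0) (1, 1) (by decide) (by decide)]
    simp
  have hn2 : n2 ρ = 0 := by
    rw [n2_eq_im_entries, hX (0, 1) (0, 0) (by decide) (by decide),
      hX (0, 0) (0, 1) (by decide) (by decide), hX (1, 1) (1, 0) (by decide) (by decide),
      hX (1, 0) (1, 1) (by decide) (by decide)]
    simp
  have hre := hρ.isHermitian.re_apply_comm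
  have ht11 : t11 ρ = 2 * ((ρ (0, 1) (1, 0)).re + (ρ (0, 0) (1, 1)).re) := by
    rw [t11_eq_re_entries]
    simp only [Complex.add_re, hre (0, 0) (1, 1), hre (0, 1) (1, 0)]
    ring
  have ht22 : t22 ρ = 2 * ((ρ (0, 1) (1, 0)).re - (ρ (0, 0) (1, 1)).re) := by
    rw [t22_eq_re_entries]
    simp only [Complex.add_re, Complex.sub_re, Complex.neg_re, hre (0, 0) (1, 1),
      hre (0, 1) (1, 0)]
    ring
  refine ⟨?_, hn1, hn2⟩
  rw [I2_eq_abs_add_abs_of_n1_n2_eq_zero hn1 hn2, ht11, ht22, abs_mul, abs_mul, abs_two]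

/-- for a two-qubit X-state (only diagonal and anti-diagonal
entries possibly nonzero), `I₂(ρ) = 2·|Re ρ₁₂ + Re ρ₀₃| + 2·|Re ρ₁₂ − Re ρ₀₃|`,
with `n₁ = n₂ = 0`. Here indices `0,1,2,3` correspond to `(0,0),(0,1),(1,0),(1,1)`. -/
theorem stmt17 (ρ : Matrix (Fin 2 × Fin 2) (Fin 2 × Fin 2) ℂ)
    (hρ : ρ.PosSemidef) (hTr : ρ.trace = 1)
    (hX : ∀ p q : Fin 2 × Fin 2, p ≠ q →
      ¬((p = ((0 : Fin 2), (0 : Fin 2)) ∧ q = ((1 : Fin 2), (1 : Fin 2)))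
        ∨ (p = ((1 : Fin 2), (1 : Fin 2)) ∧ q = ((0 : Fin 2), (0 : Fin 2)))
        ∨ (p = ((0 : Fin 2), (1 : Fin 2)) ∧ q = ((1 : Fin 2), (0 : Fin 2)))
        ∨ (p = ((1 : Fin 2), (0 : Fin 2)) ∧ q = ((0 : Fin 2), (1 : Fin 2)))) →
      ρ p q = 0) :
    I2 ρ = 2 * |(ρ ((0 : Fin 2), (1 : Fin 2)) ((1 : Fin 2), (0 : Fin 2))).re
        + (ρ ((0 : Fin 2), (0 : Fin 2)) ((1 : Fin 2), (1 : Fin 2))).re|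
      + 2 * |(ρ ((0 : Fin 2), (1 : Fin 2)) ((1 : Fin 2), (0 : Fin 2))).re
        - (ρ ((0 : Fin 2), (0 : Fin 2)) ((1 : Fin 2), (1 : Fin 2))).re|
    ∧ n1 ρ = 0 ∧ n2 ρ = 0 :=
  stmt17_general ρ hρ hX
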